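/- arXiv:1209.0166 — 7 statements merged into one kernel-verified Lean document; each statement's English description precedes it below -/
import Mathlib

section
/- Let X be a Hausdorff topological space and F a decomposition of X (a partition into nonempty sets). If F is pointwise almost periodic (i.e., the collection of closures of elements of F is again a decomposition of X) and the decomposition of closures is upper semicontinuous, then F is R-closed, i.e., the set R = {(x,y) ∈ X × X : y ∈ closure of the element of F containing x} is closed in X × X. -/
open Set Topology

/-- `F` is a decomposition of `X`: a family of pairwise disjoint nonempty
subsets whose union is `X`. -/
def IsDecomposition {X : Type*} (F : Set (Set X)) : Prop :=
  (∀ A ∈ F, A.Nonempty) ∧ (∀ A ∈ F, ∀ B ∈ F, A ≠ B → Disjoint A B) ∧ ⋃₀ F = Set.univ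

/-- `F` is R-closed: `{(x,y) : y ∈ closure (F(x))}` is closed. -/
def RClosed {X : Type*} [TopologicalSpace X] (F : Set (Set X)) : Prop :=
  IsClosed {p : X × X | ∃ A ∈ F, p.1 ∈ A ∧ p.2 ∈ closure A}

/-- `F` is pointwise almost periodic: the closures of elements of `F` again
form a decomposition, i.e. closures of distinct elements are equal or disjoint. -/
def PtwiseAP {X : Type*} [TopologicalSpace X] (F : Set (Set X)) : Prop :=
  ∀ A ∈ F, ∀ B ∈ F, closure A = closure B ∨ Disjoint (closure A) (closure B)

/-- `V` is saturated for the decomposition of closures `F̂`. -/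
def SaturatedHat {X : Type*} [TopologicalSpace X] (F : Set (Set X)) (V : Set X) : Prop :=
  ∀ A ∈ F, ¬ Disjoint (closure A) V → closure A ⊆ V

/-- The decomposition of closures `F̂` is upper semicontinuous: elements are
compact (and closed), and every open neighbourhood of an element contains a
saturated neighbourhood of that element. -/
def USCHat {X : Type*} [TopologicalSpace X] (F : Set (Set X)) : Prop :=
  (∀ A ∈ F, IsCompact (closure A)) ∧
  ∀ A ∈ F, ∀ U : Set X, IsOpen U → closure A ⊆ U →
    ∃ V : Set X, SaturatedHat F V ∧ closure A ⊆ interior V ∧ V ⊆ U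

/-!
Let `x ∈ A ∈ F` and `y ∉ closure A`. Separate the compact set `closure A` from `y` by disjoint
open sets `U` and `W ∋ y`, and shrink `U` to a saturated neighbourhood `V` of `closure A`.
If `a ∈ interior V` lies in `B ∈ F`, then `closure B` meets `V`, hence lies in `V ⊆ U`, which
misses `W`. So `interior V ×ˢ W` is a neighbourhood of `(x, y)` outside `R`.
-/

namespace IsDecomposition

theorem exists_mem {X : Type*} {F : Set (Set X)} (hF : IsDecomposition F) (x : X) :
    ∃ A ∈ F, x ∈ A :=
  mem_sUnion.1 (hF.2.2 ▸ mem_univ x)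

end IsDecomposition

section Saturated

variable {X : Type*} [TopologicalSpace X] {F : Set (Set X)}

theorem SaturatedHat.closure_subset {V : Set X} (hV : SaturatedHat F V) {B : Set X}
    (hB : B ∈ F) {a : X} (haB : a ∈ B) (haV : a ∈ V) : closure B ⊆ V :=
  hV B hB (not_disjoint_iff.2 ⟨a, subset_closure haB, haV⟩)

theorem USCHat.exists_saturated_disjoint_nhds [T2Space X] (husc : USCHat F) {A : Set X}
    (hA : A ∈ F) {y : X} (hy : y ∉ closure A) :
    ∃ V W : Set X, SaturatedHat F V ∧ closure A ⊆ interior V ∧ IsOpen W ∧ y ∈ W ∧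
      Disjoint V W := by
  obtain ⟨U, W, hU, hW, hAU, hyW, hUW⟩ := (husc.1 A hA).separation_of_notMem hy
  obtain ⟨V, hVsat, hAV, hVU⟩ := husc.2 A hA U hU hAU
  exact ⟨V, W, hVsat, hAV, hW, hyW, hUW.mono_left hVU⟩

end Saturated

theorem stmt0_general {X : Type*} [TopologicalSpace X] [T2Space X] (F : Set (Set X))
    (hF : IsDecomposition F) (husc : USCHat F) :
    RClosed F := by
  refine isOpen_compl_iff.1 (isOpen_iff_mem_nhds.2 ?_)
  rintro ⟨x, y⟩ hxy
  obtain ⟨A, hA, hxA⟩ := hF.exists_mem x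
  have hy : y ∉ closure A := fun hy => hxy ⟨A, hA, hxA, hy⟩
  obtain ⟨V, W, hVsat, hAV, hW, hyW, hVW⟩ := husc.exists_saturated_disjoint_nhds hA hy
  have hnhds : interior V ×ˢ W ∈ 𝓝 (x, y) :=
    prod_mem_nhds (isOpen_interior.mem_nhds (hAV (subset_closure hxA))) (hW.mem_nhds hyW)
  refine Filter.mem_of_superset hnhds ?_
  rintro ⟨a, b⟩ ⟨ha, hb⟩ ⟨B, hB, haB, hbB⟩
  exact hVW.notMem_of_mem_left (hVsat.closure_subset hB haB (interior_subset ha) hbB) hb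

theorem stmt0 {X : Type*} [TopologicalSpace X] [T2Space X] (F : Set (Set X))
    (hF : IsDecomposition F) (hap : PtwiseAP F) (husc : USCHat F) :
    RClosed F :=
  stmt0_general F hF husc
end

section
/- Let X be a compact metrizable space and F a decomposition of X. If F is R-closed, then F is pointwise almost periodic and the decomposition of closures {closure(L) : L ∈ F} is upper semicontinuous. -/
/-!
Write `R` for the closed relation `{(x, y) | y ∈ closure (F x)}`. If `y ∈ closure A` and
`y ∈ B`, then for every `x ∈ closure A` the pair `(y, x)` lies in the closure of `A × {x} ⊆ R`,
hence in `R`, so `x ∈ closure B`. Thus any point of `closure A` has its own element's closure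
equal to `closure A`, which gives pointwise almost periodicity. For an open `U ⊇ closure A`, the
set of `x` whose element has closure inside `U` is saturated and contains `closure A`; its
complement is the projection of the closed set `R ∩ (X × Uᶜ)` along the compact factor `X`,
hence closed.
-/

open Set Topology

theorem IsDecomposition.exists_mem_s1 {X : Type*} {F : Set (Set X)} (hF : IsDecomposition F)
    (x : X) : ∃ A ∈ F, x ∈ A :=
  mem_sUnion.mp (hF.2.2 ▸ mem_univ x)

namespace RClosed

variable {X : Type*} [TopologicalSpace X] {F : Set (Set X)}

theorem closure_subset_closure_of_mem_closure_of_mem (hF : IsDecomposition F) (hR : RClosed F)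
    {A B : Set X} (hA : A ∈ F) (hB : B ∈ F) {y : X} (hyA : y ∈ closure A) (hyB : y ∈ B) :
    closure A ⊆ closure B := by
  refine closure_minimal (fun x hx => ?_) isClosed_closure
  have hprod : A ×ˢ {x} ⊆ {p : X × X | ∃ C ∈ F, p.1 ∈ C ∧ p.2 ∈ closure C} := by
    rintro ⟨a, _⟩ ⟨ha, rfl⟩
    exact ⟨A, hA, ha, subset_closure hx⟩
  have hyx : (y, x) ∈ closure (A ×ˢ {x}) := by
    rw [closure_prod_eq]
    exact ⟨hyA, subset_closure rfl⟩
  obtain ⟨C, hC, hyC, hxC⟩ := hR.closure_subset_iff.mpr hprod hyx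
  obtain rfl : C = B := by
    by_contra hCB
    exact (hF.2.1 C hC B hB hCB).ne_of_mem hyC hyB rfl
  exact hxC

theorem closure_eq_closure_of_mem_closure_of_mem (hF : IsDecomposition F) (hR : RClosed F)
    {A B : Set X} (hA : A ∈ F) (hB : B ∈ F) {y : X} (hyA : y ∈ closure A) (hyB : y ∈ B) :
    closure A = closure B := by
  have hAB := hR.closure_subset_closure_of_mem_closure_of_mem hF hA hB hyA hyB
  obtain ⟨a, ha⟩ := hF.1 A hA
  exact hAB.antisymm
    (hR.closure_subset_closure_of_mem_closure_of_mem hF hB hA (hAB (subset_closure ha)) ha)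

theorem ptwiseAP (hF : IsDecomposition F) (hR : RClosed F) : PtwiseAP F := by
  intro A hA B hB
  refine or_iff_not_imp_right.mpr fun hAB => ?_
  obtain ⟨z, hzA, hzB⟩ := not_disjoint_iff.mp hAB
  obtain ⟨C, hC, hzC⟩ := hF.exists_mem_s1 z
  rw [hR.closure_eq_closure_of_mem_closure_of_mem hF hA hC hzA hzC,
    hR.closure_eq_closure_of_mem_closure_of_mem hF hB hC hzB hzC]

theorem closure_subset_setOf_forall_closure_subset (hF : IsDecomposition F) (hR : RClosed F)
    {A : Set X} (hA : A ∈ F) {U : Set X} (hAU : closure A ⊆ U) :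
    closure A ⊆ {x | ∀ C ∈ F, x ∈ C → closure C ⊆ U} := fun _ hx _ hC hxC =>
  hR.closure_eq_closure_of_mem_closure_of_mem hF hA hC hx hxC ▸ hAU

theorem isOpen_setOf_forall_closure_subset [CompactSpace X] (hR : RClosed F) {U : Set X}
    (hU : IsOpen U) : IsOpen {x | ∀ C ∈ F, x ∈ C → closure C ⊆ U} := by
  have hcompl : {x | ∀ C ∈ F, x ∈ C → closure C ⊆ U}ᶜ =
      Prod.fst '' ({p : X × X | ∃ C ∈ F, p.1 ∈ C ∧ p.2 ∈ closure C} ∩ Prod.snd ⁻¹' Uᶜ) := by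
    ext x
    simp only [mem_compl_iff, mem_ofPred_eq, not_forall, not_subset, mem_image, mem_inter_iff,
      mem_preimage, Prod.exists, exists_and_right, exists_eq_right, exists_prop]
    aesop
  rw [← isClosed_compl_iff, hcompl]
  exact isClosedMap_fst_of_compactSpace _ (hR.inter (hU.isClosed_compl.preimage continuous_snd))

theorem uscHat [CompactSpace X] (hF : IsDecomposition F) (hR : RClosed F) : USCHat F := by
  refine ⟨fun A _ => isClosed_closure.isCompact, fun A hA U hU hAU => ?_⟩
  set V := {x | ∀ C ∈ F, x ∈ C → closure C ⊆ U}
  have hVU : V ⊆ U := fun x hx => by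
    obtain ⟨C, hC, hxC⟩ := hF.exists_mem_s1 x
    exact hx C hC hxC (subset_closure hxC)
  have hsat : SaturatedHat F V := by
    intro B hB hBV
    obtain ⟨z, hzB, hzV⟩ := not_disjoint_iff.mp hBV
    obtain ⟨C, hC, hzC⟩ := hF.exists_mem_s1 z
    refine hR.closure_subset_setOf_forall_closure_subset hF hB ?_
    rw [hR.closure_eq_closure_of_mem_closure_of_mem hF hB hC hzB hzC]
    exact hzV C hC hzC
  refine ⟨V, hsat, ?_, hVU⟩
  rw [(hR.isOpen_setOf_forall_closure_subset hU).interior_eq]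
  exact hR.closure_subset_setOf_forall_closure_subset hF hA hAU

end RClosed

theorem stmt1_general {X : Type*} [TopologicalSpace X] [CompactSpace X]
    (F : Set (Set X)) (hF : IsDecomposition F) (hR : RClosed F) :
    PtwiseAP F ∧ USCHat F :=
  ⟨hR.ptwiseAP hF, hR.uscHat hF⟩

theorem stmt1 {X : Type*} [TopologicalSpace X] [TopologicalSpace.MetrizableSpace X] [CompactSpace X]
    (F : Set (Set X)) (hF : IsDecomposition F) (hR : RClosed F) :
    PtwiseAP F ∧ USCHat F :=
  stmt1_general F hF hR
end

section
/- Let G be a topological group acting continuously on a topological space X and H a syndetic subgroup of G, with K a compact subset of G such that K · H = G. If H is R-closed as a flow on X, then for every x ∈ X the closure of the G-orbit of x equals K · (closure of the H-orbit of x). -/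
/-!
`K • closure (H·x)` is closed, because `K` is compact, and contains `G·x = K • (H·x)`; so it
contains `closure (G·x)`. Conversely it lies in `closure (G·x)`, which is `G`-invariant.
-/

open Set MulAction Pointwise

section

variable {G X : Type*} [Group G] [MulAction G X]

theorem MulAction.orbit_subset_smul_orbit_subgroup {H : Subgroup G} {K : Set G}
    (hKH : K * (H : Set G) = univ) (x : X) : orbit G x ⊆ K • orbit H x := by
  rintro _ ⟨g, rfl⟩
  obtain ⟨k, hk, h, hh, rfl⟩ : g ∈ K * (H : Set G) := hKH ▸ mem_univ g
  exact ⟨k, hk, h • x, ⟨⟨h, hh⟩, rfl⟩, (mul_smul k h x).symm⟩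

theorem MulAction.smul_closure_orbit_subgroup_subset [TopologicalSpace X]
    [ContinuousConstSMul G X] (K : Set G) (H : Subgroup G) (x : X) :
    K • closure (orbit H x) ⊆ closure (orbit G x) :=
  smul_subset_iff.2 fun k _ _ hy =>
    smul_closure_orbit_subset k x ⟨_, closure_mono (orbit_subgroup_subset H x) hy, rfl⟩

theorem MulAction.closure_orbit_eq_smul_closure_orbit_subgroup [TopologicalSpace G]
    [IsTopologicalGroup G] [TopologicalSpace X] [ContinuousSMul G X] {H : Subgroup G}
    {K : Set G} (hK : IsCompact K) (hKH : K * (H : Set G) = univ) (x : X) :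
    closure (orbit G x) = K • closure (orbit H x) :=
  (closure_minimal
      ((orbit_subset_smul_orbit_subgroup hKH x).trans (smul_subset_smul_left subset_closure))
      (isClosed_closure.smul_left_of_isCompact hK)).antisymm
    (smul_closure_orbit_subgroup_subset K H x)

end

theorem stmt4_general {G X : Type*} [Group G] [TopologicalSpace G] [IsTopologicalGroup G]
    [TopologicalSpace X] [MulAction G X] [ContinuousSMul G X]
    (H : Subgroup G) (K : Set G) (hK : IsCompact K)
    (hsyn : K * (H : Set G) = Set.univ) :
    ∀ x : X, closure (MulAction.orbit G x)
      = Set.image2 (fun (k : G) (y : X) => k • y) K (closure (MulAction.orbit H x)) :=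
  closure_orbit_eq_smul_closure_orbit_subgroup hK hsyn

/-- If `H` is a syndetic subgroup of `G` (witnessed by a compact `K` with
`K · H = G`) and the `H`-action on `X` is R-closed, then
`closure (G·x) = K · closure (H·x)` for every `x`. -/
theorem stmt4 {G X : Type*} [Group G] [TopologicalSpace G] [IsTopologicalGroup G]
    [TopologicalSpace X] [MulAction G X] [ContinuousSMul G X]
    (H : Subgroup G) (K : Set G) (hK : IsCompact K)
    (hsyn : K * (H : Set G) = Set.univ)
    (hH : IsClosed {p : X × X | p.2 ∈ closure (MulAction.orbit H p.1)}) :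
    ∀ x : X, closure (MulAction.orbit G x)
      = Set.image2 (fun (k : G) (y : X) => k • y) K (closure (MulAction.orbit H x)) :=
  stmt4_general H K hK hsyn
end

section
/- Let G be a topological group acting continuously on a topological space X and H a syndetic subgroup of G. If the action of H on X is R-closed, then so is the action of G. -/
open Set MulAction Pointwise

/-! Writing every `g ∈ G` as `k * h` with `k ∈ K`, `h ∈ H`, the `G`-orbit closure of `x` is
`K • closure (H • x)`, so `y` lies in it iff `k⁻¹ • y ∈ closure (H • x)` for some `k ∈ K`.
The resulting relation is the projection of a closed subset of `K × X × X`, which is closed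
because `K` is compact. -/

theorem IsClosed.setOf_exists_inv_smul_mem_of_isCompact {G Y X : Type*} [Group G]
    [TopologicalSpace G] [ContinuousInv G] [TopologicalSpace Y] [TopologicalSpace X]
    [MulAction G X] [ContinuousSMul G X] {S : Set (Y × X)} (hS : IsClosed S) {K : Set G}
    (hK : IsCompact K) : IsClosed {p : Y × X | ∃ k ∈ K, (p.1, k⁻¹ • p.2) ∈ S} := by
  have : CompactSpace K := isCompact_iff_compactSpace.mp hK
  have hlift : IsClosed {q : K × (Y × X) | (q.2.1, (q.1 : G)⁻¹ • q.2.2) ∈ S} :=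
    hS.preimage <| (continuous_fst.comp continuous_snd).prodMk <|
      (continuous_subtype_val.comp continuous_fst).inv.smul (continuous_snd.comp continuous_snd)
  convert isClosedMap_snd_of_compactSpace _ hlift using 1
  ext p
  simp

theorem mem_closure_orbit_iff_exists_inv_smul_mem_closure_orbit_subgroup {G X : Type*}
    [Group G] [TopologicalSpace G] [ContinuousInv G] [TopologicalSpace X] [MulAction G X]
    [ContinuousSMul G X] {H : Subgroup G} {K : Set G} (hK : IsCompact K)
    (hsyn : K * (H : Set G) = univ) (x y : X) :
    y ∈ closure (orbit G x) ↔ ∃ k ∈ K, k⁻¹ • y ∈ closure (orbit H x) := by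
  constructor
  · intro hy
    have horbit : orbit G x ⊆ K • closure (orbit H x) := by
      rintro _ ⟨g, rfl⟩
      obtain ⟨k, hk, h, hh, rfl⟩ : g ∈ K * (H : Set G) := hsyn ▸ mem_univ g
      exact ⟨k, hk, (⟨h, hh⟩ : H) • x, subset_closure (mem_orbit x _), by simp [mul_smul]⟩
    obtain ⟨k, hk, z, hz, rfl⟩ :=
      closure_minimal horbit (isClosed_closure.smul_left_of_isCompact hK) hy
    exact ⟨k, hk, by rwa [inv_smul_smul]⟩
  · rintro ⟨k, -, hk⟩
    rw [← smul_inv_smul k y]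
    exact smul_closure_orbit_subset k x <|
      ⟨_, closure_mono (orbit_subgroup_subset H x) hk, rfl⟩

/-- If `H` is a syndetic subgroup of `G` and the `H`-action on `X` is R-closed,
then the `G`-action is R-closed. -/
theorem stmt5 {G X : Type*} [Group G] [TopologicalSpace G] [IsTopologicalGroup G]
    [TopologicalSpace X] [MulAction G X] [ContinuousSMul G X]
    (H : Subgroup G) (K : Set G) (hK : IsCompact K)
    (hsyn : K * (H : Set G) = Set.univ)
    (hH : IsClosed {p : X × X | p.2 ∈ closure (MulAction.orbit H p.1)}) :
    IsClosed {p : X × X | p.2 ∈ closure (MulAction.orbit G p.1)} := by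
  simp_rw [mem_closure_orbit_iff_exists_inv_smul_mem_closure_orbit_subgroup hK hsyn]
  exact hH.setOf_exists_inv_smul_mem_of_isCompact hK
end

section
/- Let G be a topological group acting continuously on a topological space Y such that the relation R_H = {(x,y) : y ∈ closure(H·x)} for a subgroup H is closed, and suppose K ⊆ G is compact with K·H = G and H normal in G. Then R_G = {(x,y) : y ∈ closure(G·x)} satisfies R_G = K · R_H under the G-action on Y × Y given by g·(x,y) = (x, g⁻¹·y), and hence R_G is closed. -/
/-!
Since `H` is normal, `K * H = G` gives `K⁻¹ * H = G`, so `G • x = K⁻¹ • (H • x)`, and as `K⁻¹` is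
compact, `closure (G • x) = K⁻¹ • closure (H • x)`. Read fibrewise over the first coordinate,
this says `R_G = K • R_H`. This set is closed: it is the projection along the compact factor of
the closed set `{(k, (x, y)) | (x, k • y) ∈ R_H} ⊆ K × (Y × Y)`.
-/

open Set MulAction Pointwise

theorem IsCompact.closure_smul_eq {G Y : Type*} [Group G] [TopologicalSpace G] [ContinuousInv G]
    [TopologicalSpace Y] [MulAction G Y] [ContinuousSMul G Y] {K : Set G} (hK : IsCompact K)
    (s : Set Y) : closure (K • s) = K • closure s :=
  (closure_minimal (smul_subset_smul_left subset_closure)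
    (isClosed_closure.smul_left_of_isCompact hK)).antisymm (set_smul_closure_subset K s)

theorem Subgroup.inv_mul_eq_univ_of_mul_eq_univ {G : Type*} [Group G] {H : Subgroup G} [H.Normal]
    {K : Set G} (hKH : K * (H : Set G) = univ) : K⁻¹ * (H : Set G) = univ := by
  rw [Subgroup.set_mul_normal_comm, ← inv_coe_set (H := H), ← mul_inv_rev, hKH, inv_univ]

namespace MulAction

variable {G Y : Type*} [Group G] [MulAction G Y] {H : Subgroup G} {K : Set G}

theorem orbit_eq_smul_orbit_subgroup (hKH : K * (H : Set G) = univ) (x : Y) :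
    orbit G x = K • orbit H x := by
  refine eq_of_subset_of_subset ?_ ?_
  · rintro _ ⟨g, rfl⟩
    obtain ⟨k, hk, h, hh, rfl⟩ : g ∈ K * (H : Set G) := hKH ▸ mem_univ g
    exact ⟨k, hk, h • x, ⟨⟨h, hh⟩, rfl⟩, (mul_smul k h x).symm⟩
  · rintro _ ⟨k, -, _, ⟨h, rfl⟩, rfl⟩
    exact ⟨k * h, mul_smul k (h : G) x⟩

theorem closure_orbit_eq_smul_closure_orbit_subgroup_s7 [TopologicalSpace G] [ContinuousInv G]
    [TopologicalSpace Y] [ContinuousSMul G Y] (hK : IsCompact K) (hKH : K * (H : Set G) = univ)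
    (x : Y) : closure (orbit G x) = K • closure (orbit H x) := by
  rw [orbit_eq_smul_orbit_subgroup hKH, hK.closure_smul_eq]

end MulAction

section InvSmulSnd

variable {G X Y : Type*} [Group G] [MulAction G Y] {K : Set G} {S : Set (X × Y)}

theorem mem_image2_inv_smul_snd_iff {p : X × Y} :
    p ∈ image2 (fun (g : G) (q : X × Y) => (q.1, g⁻¹ • q.2)) K S ↔
      ∃ g ∈ K, (p.1, g • p.2) ∈ S := by
  constructor
  · rintro ⟨g, hg, q, hq, rfl⟩
    exact ⟨g, hg, by simpa using hq⟩
  · rintro ⟨g, hg, hp⟩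
    exact ⟨g, hg, _, hp, by simp⟩

theorem IsClosed.image2_inv_smul_snd [TopologicalSpace G] [TopologicalSpace X]
    [TopologicalSpace Y] [ContinuousSMul G Y] (hK : IsCompact K) (hS : IsClosed S) :
    IsClosed (image2 (fun (g : G) (p : X × Y) => (p.1, g⁻¹ • p.2)) K S) := by
  have : CompactSpace K := isCompact_iff_compactSpace.mp hK
  have hpre : IsClosed {q : K × (X × Y) | (q.2.1, (q.1 : G) • q.2.2) ∈ S} :=
    hS.preimage (by fun_prop)
  convert isClosedMap_snd_of_compactSpace _ hpre using 1
  ext p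
  rw [mem_image2_inv_smul_snd_iff]
  simp

end InvSmulSnd

/-- If `H` is a normal subgroup of `G`, `K ⊆ G` is compact with `K · H = G`, and
`R_H = {(x,y) : y ∈ closure (H·x)}` is closed, then `R_G = K · R_H` under the
action `g • (x,y) = (x, g⁻¹ • y)` of `G` on `Y × Y`, and hence `R_G` is closed. -/
theorem stmt7 {G Y : Type*} [Group G] [TopologicalSpace G] [IsTopologicalGroup G]
    [TopologicalSpace Y] [MulAction G Y] [ContinuousSMul G Y]
    (H : Subgroup G) [H.Normal] (K : Set G) (hK : IsCompact K)
    (hsyn : K * (H : Set G) = Set.univ)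
    (hH : IsClosed {p : Y × Y | p.2 ∈ closure (MulAction.orbit H p.1)}) :
    {p : Y × Y | p.2 ∈ closure (MulAction.orbit G p.1)}
      = Set.image2 (fun (g : G) (p : Y × Y) => (p.1, g⁻¹ • p.2)) K
          {p : Y × Y | p.2 ∈ closure (MulAction.orbit H p.1)} ∧
    IsClosed {p : Y × Y | p.2 ∈ closure (MulAction.orbit G p.1)} := by
  have hclosure (x : Y) : closure (orbit G x) = K⁻¹ • closure (orbit H x) :=
    closure_orbit_eq_smul_closure_orbit_subgroup_s7 hK.inv
      (Subgroup.inv_mul_eq_univ_of_mul_eq_univ hsyn) x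
  have hRG : {p : Y × Y | p.2 ∈ closure (orbit G p.1)}
      = image2 (fun (g : G) (p : Y × Y) => (p.1, g⁻¹ • p.2)) K
          {p : Y × Y | p.2 ∈ closure (orbit H p.1)} := by
    ext ⟨x, y⟩
    rw [mem_image2_inv_smul_snd_iff, mem_ofPred_eq, hclosure, ← image_inv_eq_inv]
    simp only [mem_smul, exists_mem_image, inv_smul_eq_iff, exists_eq_right, mem_ofPred_eq]
  exact ⟨hRG, hRG ▸ hH.image2_inv_smul_snd hK⟩
end

section
/- Let G be a topological group acting continuously on a topological space X, H a subgroup, and K a compact subset of G with K·H = G. Then for every x ∈ X, K · closure(H·x) is a closed set containing G·x, and consequently closure(G·x) = K · closure(H·x). -/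
open Set MulAction Pointwise

section

variable {G X : Type*} [Group G] [MulAction G X]

theorem orbit_subset_smul_orbit_of_mul_eq_univ (H : Subgroup G) {K : Set G}
    (hKH : K * (H : Set G) = univ) (x : X) : orbit G x ⊆ K • orbit H x := by
  rintro _ ⟨g, rfl⟩
  obtain ⟨k, hk, h, hh, rfl⟩ : g ∈ K * (H : Set G) := hKH ▸ mem_univ g
  exact ⟨k, hk, h • x, ⟨⟨h, hh⟩, rfl⟩, (mul_smul k h x).symm⟩

theorem smul_closure_orbit_subset_closure_orbit [TopologicalSpace X] [ContinuousConstSMul G X]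
    (H : Subgroup G) (K : Set G) (x : X) : K • closure (orbit H x) ⊆ closure (orbit G x) := by
  rintro _ ⟨k, -, y, hy, rfl⟩
  have hy' : k • y ∈ k • closure (orbit G x) :=
    smul_mem_smul_set (closure_mono (orbit_subgroup_subset H x) hy)
  exact closure_mono (smul_orbit_subset k x) (smul_closure_subset k _ hy')

end

/-- If `K ⊆ G` is compact with `K · H = G`, then for every `x`,
`K · closure (H·x)` is a closed set containing `G·x`, and consequently
`closure (G·x) = K · closure (H·x)`. -/
theorem stmt8 {G X : Type*} [Group G] [TopologicalSpace G] [IsTopologicalGroup G]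
    [TopologicalSpace X] [MulAction G X] [ContinuousSMul G X]
    (H : Subgroup G) (K : Set G) (hK : IsCompact K)
    (hsyn : K * (H : Set G) = Set.univ) :
    ∀ x : X,
      IsClosed (Set.image2 (fun (k : G) (y : X) => k • y) K
        (closure (MulAction.orbit H x))) ∧
      MulAction.orbit G x ⊆ Set.image2 (fun (k : G) (y : X) => k • y) K
        (closure (MulAction.orbit H x)) ∧
      closure (MulAction.orbit G x)
        = Set.image2 (fun (k : G) (y : X) => k • y) K
            (closure (MulAction.orbit H x)) := by
  intro x
  have hclosed : IsClosed (K • closure (orbit H x)) := isClosed_closure.smul_left_of_isCompact hK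
  have hsub : orbit G x ⊆ K • closure (orbit H x) :=
    (orbit_subset_smul_orbit_of_mul_eq_univ H hsyn x).trans (smul_subset_smul_left subset_closure)
  exact ⟨hclosed, hsub,
    (closure_minimal hsub hclosed).antisymm (smul_closure_orbit_subset_closure_orbit H K x)⟩
end

section
/- Let F be an R-closed decomposition of a compact metrizable space X and let F̂ denote the decomposition of closures. Then the quotient space X/F̂ is compact, Hausdorff, and metrizable. -/
open Set Topology

/-- The relation whose classes are the closures of elements of `F`; its `Quot`
is the quotient space `X/F̂`. -/
def hatRel {X : Type*} [TopologicalSpace X] (F : Set (Set X)) (x y : X) : Prop :=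
  ∃ A ∈ F, x ∈ closure A ∧ y ∈ closure A

/-!
R-closedness makes `closure A ×ˢ closure A` lie in the closed relation `R` for every `A ∈ F`, so
the closures of the members of `F` partition `X` and the relation they induce is `R` itself.
The quotient map by a closed equivalence relation on a compact space is closed with compact
fibres and the quotient is T1; closed continuous surjections preserve normality, and with compact
fibres also second countability, so Urysohn's metrization theorem applies.
-/

open TopologicalSpace

theorem TopologicalSpace.IsTopologicalBasis.exists_finite_sUnion_between {X : Type*}
    [TopologicalSpace X] {B : Set (Set X)} (hB : IsTopologicalBasis B) {K U : Set X}
    (hK : IsCompact K) (hU : IsOpen U) (hKU : K ⊆ U) :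
    ∃ s ⊆ B, s.Finite ∧ K ⊆ ⋃₀ s ∧ ⋃₀ s ⊆ U := by
  have hcover : K ⊆ ⋃ V ∈ {V ∈ B | V ⊆ U}, id V := fun x hx => by
    obtain ⟨V, hVB, hxV, hVU⟩ := hB.exists_subset_of_mem_open (hKU hx) hU
    exact mem_biUnion ⟨hVB, hVU⟩ hxV
  obtain ⟨s, hs, hfin, hKs⟩ :=
    hK.elim_finite_subcover_image (fun V hV => hB.isOpen hV.1) hcover
  exact ⟨s, fun V hV => (hs hV).1, hfin, by simpa [sUnion_eq_biUnion] using hKs,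
    sUnion_subset fun V hV => (hs hV).2⟩

namespace IsClosedMap

variable {X Y : Type*} [TopologicalSpace X] [TopologicalSpace Y] {q : X → Y}

theorem normalSpace [NormalSpace X] (hq : IsClosedMap q) (hcont : Continuous q)
    (hsurj : Function.Surjective q) : NormalSpace Y := by
  refine ⟨fun s t hs ht hst => separatedNhds_iff_disjoint.2 ?_⟩
  rw [← Filter.disjoint_comap_iff hsurj, hq.comap_nhdsSet_eq hcont, hq.comap_nhdsSet_eq hcont,
    ← separatedNhds_iff_disjoint]
  exact normal_separation (hs.preimage hcont) (ht.preimage hcont) (hst.preimage q)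

theorem secondCountableTopology [SecondCountableTopology X] (hq : IsClosedMap q)
    (hcont : Continuous q) (hsurj : Function.Surjective q)
    (hfib : ∀ y, IsCompact (q ⁻¹' {y})) : SecondCountableTopology Y := by
  -- `(q '' Uᶜ)ᶜ` is the set of points whose fibre lies in `U`; it is open when `U` is.
  let 𝔅 : Set (Set Y) :=
    (fun s : Set (Set X) => (q '' (⋃₀ s)ᶜ)ᶜ) '' {s | s.Finite ∧ s ⊆ countableBasis X}
  have hcount : 𝔅.Countable :=
    (countable_ofPred_finite_subset (countable_countableBasis X)).image _
  refine (isTopologicalBasis_of_isOpen_of_nhds ?_ ?_).secondCountableTopology hcount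
  · rintro _ ⟨s, ⟨-, hs⟩, rfl⟩
    have hopen : IsOpen (⋃₀ s) := isOpen_sUnion fun V hV => isOpen_of_mem_countableBasis (hs hV)
    exact (hq _ hopen.isClosed_compl).isOpen_compl
  · intro y W hyW hW
    obtain ⟨s, hsB, hfin, hys, hsW⟩ := (isBasis_countableBasis X).exists_finite_sUnion_between
      (hfib y) (hW.preimage hcont) (preimage_mono (singleton_subset_iff.2 hyW))
    refine ⟨_, ⟨s, ⟨hfin, hsB⟩, rfl⟩, ?_, ?_⟩
    · rintro ⟨x, hx, rfl⟩
      exact hx (hys rfl)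
    · intro z hz
      obtain ⟨x, rfl⟩ := hsurj z
      by_contra hxW
      exact hz ⟨x, fun hx => hxW (hsW hx), rfl⟩

end IsClosedMap

section ClosedEquivalence

variable {X : Type*} [TopologicalSpace X] {r : X → X → Prop}

theorem isClosedMap_quot_mk [CompactSpace X] (hr : Equivalence r)
    (hc : IsClosed {p : X × X | r p.1 p.2}) : IsClosedMap (Quot.mk r) := by
  intro C hC
  rw [← isQuotientMap_quot_mk.isClosed_preimage]
  have hsat : Quot.mk r ⁻¹' (Quot.mk r '' C) =
      Prod.fst '' ({p : X × X | r p.1 p.2} ∩ Prod.snd ⁻¹' C) := by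
    ext x
    simp only [mem_preimage, mem_image, mem_inter_iff, mem_ofPred_eq, Prod.exists,
      exists_and_right, exists_eq_right, hr.quot_mk_eq_iff]
    exact exists_congr fun c => and_comm.trans (and_congr_left' ⟨hr.symm, hr.symm⟩)
  rw [hsat]
  exact isClosedMap_fst_of_compactSpace _ (hc.inter (hC.preimage continuous_snd))

theorem isClosed_preimage_quot_mk_singleton (hr : Equivalence r)
    (hc : IsClosed {p : X × X | r p.1 p.2}) (x : X) :
    IsClosed (Quot.mk r ⁻¹' {Quot.mk r x}) := by
  have hfib : Quot.mk r ⁻¹' {Quot.mk r x} = (fun z => (z, x)) ⁻¹' {p : X × X | r p.1 p.2} := by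
    ext z
    exact hr.quot_mk_eq_iff z x
  rw [hfib]
  exact hc.preimage (continuous_id.prodMk continuous_const)

theorem t1Space_quot (hr : Equivalence r) (hc : IsClosed {p : X × X | r p.1 p.2}) :
    T1Space (Quot r) :=
  ⟨Quot.ind fun x => isQuotientMap_quot_mk.isClosed_preimage.1
    (isClosed_preimage_quot_mk_singleton hr hc x)⟩

theorem metrizableSpace_quot [MetrizableSpace X] [CompactSpace X] (hr : Equivalence r)
    (hc : IsClosed {p : X × X | r p.1 p.2}) : MetrizableSpace (Quot r) := by
  have hq := isClosedMap_quot_mk hr hc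
  have := t1Space_quot hr hc
  have := hq.normalSpace continuous_quot_mk Quot.exists_rep
  have := hq.secondCountableTopology continuous_quot_mk Quot.exists_rep
    (Quot.ind fun x => (isClosed_preimage_quot_mk_singleton hr hc x).isCompact)
  exact metrizableSpace_of_t3_secondCountable _

end ClosedEquivalence

section Decomposition

variable {X : Type*} [TopologicalSpace X] {F : Set (Set X)}

theorem RClosed.closure_prod_closure_subset (hR : RClosed F) {A : Set X} (hA : A ∈ F) :
    closure A ×ˢ closure A ⊆ {p : X × X | ∃ A ∈ F, p.1 ∈ A ∧ p.2 ∈ closure A} := by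
  calc closure A ×ˢ closure A = closure (A ×ˢ closure A) := by
        rw [closure_prod_eq, closure_closure]
    _ ⊆ _ := hR.closure_subset_iff.2 fun p hp => ⟨A, hA, hp.1, hp.2⟩

theorem RClosed.setOf_hatRel_eq (hR : RClosed F) :
    {p : X × X | hatRel F p.1 p.2} = {p : X × X | ∃ A ∈ F, p.1 ∈ A ∧ p.2 ∈ closure A} := by
  ext p
  constructor
  · rintro ⟨A, hA, hp⟩
    exact hR.closure_prod_closure_subset hA hp
  · rintro ⟨A, hA, h₁, h₂⟩
    exact ⟨A, hA, subset_closure h₁, h₂⟩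

theorem RClosed.isClosed_hatRel (hR : RClosed F) : IsClosed {p : X × X | hatRel F p.1 p.2} :=
  hR.setOf_hatRel_eq ▸ hR

theorem IsDecomposition.equivalence_hatRel (hF : IsDecomposition F) (hR : RClosed F) :
    Equivalence (hatRel F) := by
  obtain ⟨-, hdisj, hcov⟩ := hF
  refine ⟨fun x => ?_, fun ⟨A, hA, hx, hy⟩ => ⟨A, hA, hy, hx⟩, ?_⟩
  · obtain ⟨A, hA, hx⟩ := mem_sUnion.1 (hcov ▸ mem_univ x)
    exact ⟨A, hA, subset_closure hx, subset_closure hx⟩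
  · rintro x y z ⟨A, hA, hxA, hyA⟩ ⟨B, hB, hyB, hzB⟩
    -- `y` lies in a unique member `C` of `F`, and both `x` and `z` lie in its closure.
    obtain ⟨C, hC, hyC, hxC⟩ := hR.closure_prod_closure_subset hA (mk_mem_prod hyA hxA)
    obtain ⟨D, hD, hyD, hzD⟩ := hR.closure_prod_closure_subset hB (mk_mem_prod hyB hzB)
    obtain rfl : C = D := by_contra fun hCD => disjoint_left.1 (hdisj C hC D hD hCD) hyC hyD
    exact ⟨C, hC, hxC, hzD⟩

end Decomposition

theorem stmt12 {X : Type*} [TopologicalSpace X] [TopologicalSpace.MetrizableSpace X]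
    [CompactSpace X] (F : Set (Set X)) (hF : IsDecomposition F) (hR : RClosed F) :
    CompactSpace (Quot (hatRel F)) ∧ T2Space (Quot (hatRel F)) ∧
      TopologicalSpace.MetrizableSpace (Quot (hatRel F)) := by
  have := metrizableSpace_quot (hF.equivalence_hatRel hR) hR.isClosed_hatRel
  exact ⟨inferInstance, inferInstance, this⟩
end
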